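/- With the update matrix M^{FFK} = X̂^{1/2}(Ȳ¹)^{−1/2} Y¹ (Ȳ¹)^{−1/2} X̂^{1/2} + (m−1) X̂^{1/2}(Ȳ²)^{−1/2} Y² (Ȳ²)^{−1/2} X̂^{1/2}, where Ȳ¹ = HPHᵀ + (sX̂+R)/m and Ȳ² = ((m−1)/m)(sX̂+R), and random matrices Y¹, Y² satisfying E[Y¹] = Ȳ¹ and E[Y²] = Ȳ², the expected value of M^{FFK} equals m X̂. -/

import Mathlib

open Matrix MeasureTheory

open scoped ComplexOrder in
noncomputable def Matrix.PosSemidef.sqrt {n 𝕜 : Type*} [Fintype n] [RCLike 𝕜] [DecidableEq n]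
    {A : Matrix n n 𝕜} (hA : A.PosSemidef) : Matrix n n 𝕜 :=
  hA.1.eigenvectorUnitary.1 * diagonal ((↑) ∘ (√·) ∘ hA.1.eigenvalues) *
  (star hA.1.eigenvectorUnitary : Matrix n n 𝕜)

lemma Matrix.PosSemidef.sqrt_mul_self {d : ℕ} {M : Matrix (Fin d) (Fin d) ℝ}
    (hM : M.PosSemidef) : hM.sqrt * hM.sqrt = M := by
  have hU : (star hM.1.eigenvectorUnitary : Matrix (Fin d) (Fin d) ℝ) *
      hM.1.eigenvectorUnitary.1 = 1 := Unitary.coe_star_mul_self _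
  have hD : diagonal ((↑) ∘ (√·) ∘ hM.1.eigenvalues) * diagonal ((↑) ∘ (√·) ∘ hM.1.eigenvalues)
      = diagonal (RCLike.ofReal ∘ hM.1.eigenvalues : Fin d → ℝ) := by
    rw [diagonal_mul_diagonal]; congr 1; funext k
    simp [Real.mul_self_sqrt (hM.eigenvalues_nonneg k)]
  conv_rhs => rw [hM.1.spectral_theorem, Unitary.conjStarAlgAut_apply]
  unfold Matrix.PosSemidef.sqrt
  calc _ = hM.1.eigenvectorUnitary.1 * diagonal ((↑) ∘ (√·) ∘ hM.1.eigenvalues) *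
      ((star hM.1.eigenvectorUnitary : Matrix (Fin d) (Fin d) ℝ) * hM.1.eigenvectorUnitary.1) *
      diagonal ((↑) ∘ (√·) ∘ hM.1.eigenvalues) *
      (star hM.1.eigenvectorUnitary : Matrix (Fin d) (Fin d) ℝ) := by simp only [Matrix.mul_assoc]; rfl
    _ = _ := by rw [hU, Matrix.mul_one, Matrix.mul_assoc _ (diagonal _) (diagonal _), hD]

section aux

variable {Ω : Type*} [MeasureSpace Ω] {d : ℕ}

lemma conj_entry (A B : Matrix (Fin d) (Fin d) ℝ) (Y : Matrix (Fin d) (Fin d) ℝ)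
    (i j : Fin d) : (A * Y * B) i j = ∑ l, ∑ k, A i k * Y k l * B l j := by
  simp [Matrix.mul_apply, Finset.sum_mul]

lemma integrable_conj_entry (A B : Matrix (Fin d) (Fin d) ℝ)
    (Y : Ω → Matrix (Fin d) (Fin d) ℝ)
    (hint : ∀ i j, Integrable (fun ω => Y ω i j) volume) (i j : Fin d) :
    Integrable (fun ω => (A * Y ω * B) i j) volume := by
  simp only [conj_entry]
  refine integrable_finset_sum _ fun l _ => integrable_finset_sum _ fun k _ => ?_
  exact ((hint k l).const_mul (A i k)).mul_const (B l j)

lemma integral_conj_entry (A B : Matrix (Fin d) (Fin d) ℝ)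
    (Y : Ω → Matrix (Fin d) (Fin d) ℝ) (Ybar : Matrix (Fin d) (Fin d) ℝ)
    (hint : ∀ i j, Integrable (fun ω => Y ω i j) volume)
    (hE : ∀ i j, ∫ ω, Y ω i j = Ybar i j) (i j : Fin d) :
    ∫ ω, (A * Y ω * B) i j = (A * Ybar * B) i j := by
  simp only [conj_entry]
  rw [integral_finset_sum _ fun l _ => integrable_finset_sum _ fun k _ =>
    ((hint k l).const_mul (A i k)).mul_const (B l j)]
  refine Finset.sum_congr rfl fun l _ => ?_
  rw [integral_finset_sum _ fun k _ => ((hint k l).const_mul (A i k)).mul_const (B l j)]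
  refine Finset.sum_congr rfl fun k _ => ?_
  rw [show (fun ω => A i k * Y ω k l * B l j) = fun ω => (A i k * B l j) * Y ω k l by
    funext ω; ring, integral_const_mul, hE]
  ring

lemma conj_sqrt_inv {M : Matrix (Fin d) (Fin d) ℝ} (hM : M.PosDef)
    (S : Matrix (Fin d) (Fin d) ℝ) :
    S * (hM.posSemidef.sqrt)⁻¹ * M * ((hM.posSemidef.sqrt)⁻¹ * S) = S * S := by
  set T := hM.posSemidef.sqrt with hT
  have hTT : T * T = M := hM.posSemidef.sqrt_mul_self
  have hdet : IsUnit T.det := by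
    have h2 : T.det * T.det = M.det := by rw [← Matrix.det_mul, hTT]
    have : M.det ≠ 0 := ne_of_gt hM.det_pos
    refine isUnit_iff_ne_zero.mpr fun h => this ?_
    rw [← h2, h]; ring
  calc S * T⁻¹ * M * (T⁻¹ * S) = S * (T⁻¹ * T) * ((T * T⁻¹) * S) := by
        rw [← hTT]; noncomm_ring
    _ = S * S := by rw [Matrix.nonsing_inv_mul _ hdet, Matrix.mul_nonsing_inv _ hdet]; simp

end aux

/-- With `Ȳ¹ = HPHᵀ + (sX̂+R)/m`, `Ȳ² = ((m−1)/m)(sX̂+R)` and random symmetric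
positive semidefinite matrices `Y¹, Y²` with `E[Y¹] = Ȳ¹`, `E[Y²] = Ȳ²`, the Feldmann et al.
update matrix
`M^{FFK} = X̂^{1/2}(Ȳ¹)^{−1/2} Y¹ (Ȳ¹)^{−1/2} X̂^{1/2} + (m−1) X̂^{1/2}(Ȳ²)^{−1/2} Y² (Ȳ²)^{−1/2} X̂^{1/2}`
has expected value `m X̂`. -/
theorem FFK_update_unbiased
    {Ω : Type*} [MeasureSpace Ω] [IsProbabilityMeasure (volume : Measure Ω)]
    (n d m : ℕ) (hm : 0 < m)
    (H : Matrix (Fin d) (Fin n) ℝ) (P : Matrix (Fin n) (Fin n) ℝ) (hP : P.PosSemidef)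
    (Xhat R : Matrix (Fin d) (Fin d) ℝ) (hX : Xhat.PosDef) (hR : R.PosDef)
    (s : ℝ) (hs : 0 < s)
    (Ybar1 Ybar2 : Matrix (Fin d) (Fin d) ℝ)
    (hYbar1def : Ybar1 = H * P * Hᵀ + (m : ℝ)⁻¹ • (s • Xhat + R))
    (hYbar2def : Ybar2 = (((m : ℝ) - 1) / m) • (s • Xhat + R))
    (hY1pd : Ybar1.PosDef) (hY2pd : Ybar2.PosDef)
    (Y1 Y2 : Ω → Matrix (Fin d) (Fin d) ℝ)
    (hY1psd : ∀ ω, (Y1 ω).PosSemidef) (hY2psd : ∀ ω, (Y2 ω).PosSemidef)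
    (hY1int : ∀ i j, Integrable (fun ω => Y1 ω i j) volume)
    (hY2int : ∀ i j, Integrable (fun ω => Y2 ω i j) volume)
    (hEY1 : ∀ i j, ∫ ω, Y1 ω i j = Ybar1 i j)
    (hEY2 : ∀ i j, ∫ ω, Y2 ω i j = Ybar2 i j)
    (MFFK : Ω → Matrix (Fin d) (Fin d) ℝ)
    (hMFFK : ∀ ω, MFFK ω =
      hX.posSemidef.sqrt * (hY1pd.posSemidef.sqrt)⁻¹ * Y1 ω *
          (hY1pd.posSemidef.sqrt)⁻¹ * hX.posSemidef.sqrt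
        + ((m : ℝ) - 1) • (hX.posSemidef.sqrt * (hY2pd.posSemidef.sqrt)⁻¹ * Y2 ω *
          (hY2pd.posSemidef.sqrt)⁻¹ * hX.posSemidef.sqrt)) :
    ∀ i j, ∫ ω, MFFK ω i j = (m : ℝ) * Xhat i j := by
  intro i j
  set S := hX.posSemidef.sqrt with hS
  set T1 := (hY1pd.posSemidef.sqrt)⁻¹ with hT1
  set T2 := (hY2pd.posSemidef.sqrt)⁻¹ with hT2
  have hSS : S * S = Xhat := hX.posSemidef.sqrt_mul_self
  have key : ∀ ω, MFFK ω i j =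
      ((S * T1) * Y1 ω * (T1 * S)) i j
        + ((m : ℝ) - 1) * (((S * T2) * Y2 ω * (T2 * S)) i j) := by
    intro ω
    rw [hMFFK ω]
    simp [Matrix.add_apply, Matrix.smul_apply, Matrix.mul_assoc]
  simp only [key]
  rw [integral_add (integrable_conj_entry _ _ _ hY1int i j)
    (((integrable_conj_entry _ _ _ hY2int i j)).const_mul _)]
  rw [integral_const_mul, integral_conj_entry _ _ _ _ hY1int hEY1,
    integral_conj_entry _ _ _ _ hY2int hEY2]
  have h1 : (S * T1) * Ybar1 * (T1 * S) = Xhat := (conj_sqrt_inv hY1pd S).trans hSS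
  have h2 : (S * T2) * Ybar2 * (T2 * S) = Xhat := (conj_sqrt_inv hY2pd S).trans hSS
  rw [h1, h2]
  ring
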